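/- arXiv:1909.01485 — 6 statements merged into one kernel-verified Lean document; each statement's English description precedes it below -/
import Mathlib

section
/- Let G be a finite group and m a positive integer dividing the order of G. Then m divides the number of elements x in G satisfying x^m = 1. -/
/-!
Strong induction on `|G|`. Fix a prime `p` and write `n = p ^ j * b` with `p ∤ b`. By Bézout,
every solution of `x ^ n = 1` is uniquely a commuting product `z * y` with `z ^ b = 1` and
`y ^ p ^ j = 1`, so the number of solutions is the sum over `z` of `#{y ∈ C(z) | y ^ p ^ j = 1}`.
The summand is constant on conjugacy classes. For non-central `z` the class has `|G : C(z)|`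
elements and, by induction, the summand is divisible by `gcd (p ^ j) |C(z)|`, so the class
contributes a multiple of `p ^ j`. Modulo `p ^ j` only the central `z` remain, each contributing
`#{y | y ^ p ^ j = 1}`.

So it suffices to treat `n = p ^ k`, by descending induction on `k`: the elements of order exactly
`p ^ (k + 1)` come in blocks of `φ (p ^ (k + 1)) = p ^ k * (p - 1)` generators of one cyclic
subgroup. For the largest `k`, apply the reduction to `n = |G|`, which every element solves: the
central elements with `z ^ b = 1` form a group of order prime to `p`, so `p ^ k` divides
`#{y | y ^ p ^ k = 1}`.
-/

open Finset MulAction Subgroup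

theorem dvd_sum_of_dvd_card_orbit_mul {K α : Type*} [Group K] [MulAction K α] [Fintype α]
    {F : α → ℕ} (hF : ∀ (k : K) a, F (k • a) = F a) {d : ℕ}
    (hd : ∀ a, d ∣ Nat.card (orbit K a) * F a) : d ∣ ∑ a, F a := by
  classical
  rw [← (selfEquivSigmaOrbits K α).symm.sum_comp, Fintype.sum_sigma]
  refine dvd_sum fun ω _ => ?_
  have hconst : ∀ a : orbit K ω.out, F a = F ω.out := by
    rintro ⟨_, k, rfl⟩
    exact hF k _
  change d ∣ ∑ a : orbit K ω.out, F a
  simpa [hconst, Nat.card_eq_fintype_card] using hd ω.out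

theorem sum_modEq_sum_fixedPoints {K α : Type*} [Group K] [MulAction K α] [Fintype α]
    [DecidablePred (· ∈ fixedPoints K α)] {F : α → ℕ} (hF : ∀ (k : K) a, F (k • a) = F a)
    {d : ℕ} (hd : ∀ a ∉ fixedPoints K α, d ∣ Nat.card (orbit K a) * F a) :
    ∑ a, F a ≡ ∑ a with a ∈ fixedPoints K α, F a [MOD d] := by
  rw [← sum_filter_add_sum_filter_not univ (· ∈ fixedPoints K α)]
  refine (Nat.modEq_iff_dvd' (Nat.le_add_right _ _)).2 ?_ |>.symm
  rw [Nat.add_sub_cancel_left, sum_filter]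
  refine dvd_sum_of_dvd_card_orbit_mul (K := K) (fun k a => ?_) fun a => ?_
  · have hfix : k • a ∈ fixedPoints K α ↔ a ∈ fixedPoints K α := by
      rw [← subsingleton_orbit_iff_mem_fixedPoints, ← subsingleton_orbit_iff_mem_fixedPoints,
        orbit_smul]
    simp only [hfix, hF]
  · split_ifs with ha
    · simp
    · exact hd a ha

section

variable {G : Type*} [Group G]

theorem card_orbit_conjAct_mul_card_centralizer [Finite G] (z : G) :
    Nat.card (orbit (ConjAct G) z) * Nat.card (centralizer {z}) = Nat.card G := by
  have h := index_mul_card (stabilizer (ConjAct G) z)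
  rwa [index_stabilizer, ConjAct.stabilizer_eq_centralizer] at h

theorem card_pow_eq_one_eq_card_pow_gcd_eq_one [Finite G] (n : ℕ) :
    Nat.card {x : G // x ^ n = 1} = Nat.card {x : G // x ^ n.gcd (Nat.card G) = 1} := by
  simp only [pow_gcd_eq_one, pow_card_eq_one', and_true]

theorem zpow_natCast_mul_eq_one {x : G} {n : ℕ} (hx : x ^ n = 1) (k : ℤ) :
    x ^ ((n : ℤ) * k) = 1 := by
  rw [zpow_mul, zpow_natCast, hx, one_zpow]

def powMulEqOneEquiv {a b : ℕ} (hab : a.Coprime b) :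
    {x : G // x ^ (a * b) = 1} ≃ {p : G × G // p.1 ^ b = 1 ∧ Commute p.2 p.1 ∧ p.2 ^ a = 1} :=
  have bezout : (a : ℤ) * a.gcdA b + b * a.gcdB b = 1 := by
    rw [← Nat.gcd_eq_gcd_ab, hab.gcd_eq_one, Nat.cast_one]
  have split (x : G) : x ^ ((a : ℤ) * a.gcdA b) * x ^ ((b : ℤ) * a.gcdB b) = x := by
    rw [← zpow_add, bezout, zpow_one]
  { toFun := fun ⟨x, hx⟩ => ⟨(x ^ ((a : ℤ) * a.gcdA b), x ^ ((b : ℤ) * a.gcdB b)), by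
      refine ⟨?_, (Commute.refl x).zpow_zpow _ _, ?_⟩
      · rw [← zpow_natCast, ← zpow_mul, mul_right_comm, ← Nat.cast_mul,
          zpow_natCast_mul_eq_one hx]
      · rw [← zpow_natCast, ← zpow_mul, mul_right_comm, ← Nat.cast_mul, mul_comm b,
          zpow_natCast_mul_eq_one hx]⟩
    invFun p := ⟨p.1.1 * p.1.2, by
      rw [p.2.2.1.symm.mul_pow, pow_mul', p.2.1, pow_mul, p.2.2.2, one_pow, one_pow, one_mul]⟩
    left_inv x := Subtype.ext (split x.1)
    right_inv := by
      rintro ⟨⟨z, y⟩, hz, hyz, hy⟩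
      ext
      · change (z * y) ^ _ = z
        rw [hyz.symm.mul_zpow, zpow_natCast_mul_eq_one hy, mul_one]
        simpa [zpow_natCast_mul_eq_one hz] using split z
      · change (z * y) ^ _ = y
        rw [hyz.symm.mul_zpow, zpow_natCast_mul_eq_one hz, one_mul]
        simpa [zpow_natCast_mul_eq_one hy] using split y }

theorem card_pow_mul_eq_one_eq_sum [Fintype G] {a b : ℕ} (hab : a.Coprime b) :
    Nat.card {x : G // x ^ (a * b) = 1} =
      ∑ z, Nat.card {y : G // z ^ b = 1 ∧ Commute y z ∧ y ^ a = 1} := by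
  rw [Nat.card_congr ((powMulEqOneEquiv hab).trans
    (Equiv.subtypeProdEquivSigmaSubtype fun z y => z ^ b = 1 ∧ Commute y z ∧ y ^ a = 1)),
    Nat.card_sigma]

theorem card_commute_pow_eq_one_conjAct_smul (g : ConjAct G) (z : G) (a b : ℕ) :
    Nat.card {y : G // (g • z) ^ b = 1 ∧ Commute y (g • z) ∧ y ^ a = 1} =
      Nat.card {y : G // z ^ b = 1 ∧ Commute y z ∧ y ^ a = 1} := by
  refine (Nat.card_congr ((MulAut.conj (ConjAct.ofConjAct g)).toEquiv.subtypeEquiv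
    fun y => ?_)).symm
  simp only [MulEquiv.toEquiv_eq_coe, EquivLike.coe_coe, ConjAct.smul_eq_mulAut_conj,
    ← map_pow, map_eq_one_iff _ (MulEquiv.injective _), commute_map_iff (MulEquiv.injective _)]

theorem card_commute_pow_eq_one_of_mem_center [DecidableEq G] {z : G} (hz : z ∈ center G)
    (a b : ℕ) :
    Nat.card {y : G // z ^ b = 1 ∧ Commute y z ∧ y ^ a = 1} =
      if z ^ b = 1 then Nat.card {y : G // y ^ a = 1} else 0 := by
  split_ifs with hzb
  · exact Nat.card_congr (Equiv.subtypeEquivRight fun y => by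
      simp only [hzb, true_and, and_iff_right_iff_imp]
      exact fun _ => mem_center_iff.1 hz y)
  · simp [hzb]

theorem card_commute_pow_eq_one_eq_card_centralizer {z : G} {b : ℕ} (hzb : z ^ b = 1) (a : ℕ) :
    Nat.card {y : G // z ^ b = 1 ∧ Commute y z ∧ y ^ a = 1} =
      Nat.card {y : centralizer {z} // y ^ a = 1} := by
  refine Nat.card_congr ((Equiv.subtypeEquivRight fun y => ?_).trans
    ((Equiv.subtypeSubtypeEquivSubtypeInter (· ∈ centralizer {z}) (· ^ a = 1)).symm.trans
      (Equiv.subtypeEquivRight fun y => ?_)))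
  · simp only [hzb, mem_centralizer_singleton_iff, true_and]
    rfl
  · rw [← Subgroup.coe_pow, OneMemClass.coe_eq_one]

theorem dvd_card_orbit_mul_card_commute_pow_eq_one [Finite G] {a : ℕ} (ha : a ∣ Nat.card G)
    (ih : ∀ H : Subgroup G, H ≠ ⊤ → ∀ n, n ∣ Nat.card H → n ∣ Nat.card {y : H // y ^ n = 1})
    {z : G} (hz : z ∉ center G) (b : ℕ) :
    a ∣ Nat.card (orbit (ConjAct G) z) *
      Nat.card {y : G // z ^ b = 1 ∧ Commute y z ∧ y ^ a = 1} := by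
  by_cases hzb : z ^ b = 1
  swap
  · simp [hzb]
  have hC : centralizer {z} ≠ ⊤ := by
    rwa [Ne, centralizer_eq_top_iff_subset, Set.singleton_subset_iff]
  have hdvd : a.gcd (Nat.card (centralizer {z})) ∣
      Nat.card {y : G // z ^ b = 1 ∧ Commute y z ∧ y ^ a = 1} := by
    rw [card_commute_pow_eq_one_eq_card_centralizer hzb, card_pow_eq_one_eq_card_pow_gcd_eq_one]
    exact ih _ hC _ (Nat.gcd_dvd_right _ _)
  calc a = a.gcd (Nat.card (orbit (ConjAct G) z) * Nat.card (centralizer {z})) := by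
        rw [card_orbit_conjAct_mul_card_centralizer, Nat.gcd_eq_left ha]
    _ ∣ a.gcd (Nat.card (orbit (ConjAct G) z)) * a.gcd (Nat.card (centralizer {z})) :=
        gcd_mul_dvd_mul_gcd _ _ _
    _ ∣ _ := mul_dvd_mul (Nat.gcd_dvd_right _ _) hdvd

theorem card_pow_mul_eq_one_modEq [Finite G] {a b : ℕ} (hab : a.Coprime b) (ha : a ∣ Nat.card G)
    (ih : ∀ H : Subgroup G, H ≠ ⊤ → ∀ n, n ∣ Nat.card H → n ∣ Nat.card {y : H // y ^ n = 1}) :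
    Nat.card {x : G // x ^ (a * b) = 1} ≡
      Nat.card {z : G // z ∈ center G ∧ z ^ b = 1} * Nat.card {y : G // y ^ a = 1} [MOD a] := by
  classical
  have := Fintype.ofFinite G
  rw [card_pow_mul_eq_one_eq_sum hab]
  refine (sum_modEq_sum_fixedPoints (K := ConjAct G)
    (fun g z => card_commute_pow_eq_one_conjAct_smul g z a b) fun z hz => ?_).trans ?_
  · rw [ConjAct.fixedPoints_eq_center] at hz
    exact dvd_card_orbit_mul_card_commute_pow_eq_one ha ih hz b
  simp only [ConjAct.fixedPoints_eq_center, SetLike.mem_coe]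
  rw [sum_congr rfl fun z hz => card_commute_pow_eq_one_of_mem_center (mem_filter.1 hz).2 a b,
    sum_ite, sum_const_zero, add_zero, sum_const, smul_eq_mul, filter_filter,
    Nat.card_eq_fintype_card (α := {z // _ ∧ _}), Fintype.card_subtype]

theorem totient_dvd_card_orderOf_eq [Finite G] (d : ℕ) :
    d.totient ∣ Nat.card {x : G // orderOf x = d} := by
  classical
  have := Fintype.ofFinite G
  rw [Nat.card_eq_fintype_card, Fintype.card_subtype,
    card_eq_sum_card_image (fun x => zpowers x)]
  refine dvd_sum fun H hH => ?_
  obtain ⟨y, hy, rfl⟩ := mem_image.1 hH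
  rw [mem_filter] at hy
  have hgen (x : G) :
      (orderOf x = d ∧ zpowers x = zpowers y) ↔ x ∈ zpowers y ∧ orderOf x = d := by
    refine ⟨fun ⟨hx, hxy⟩ => ⟨hxy ▸ mem_zpowers x, hx⟩,
      fun ⟨hxy, hx⟩ => ⟨hx, eq_of_le_of_card_ge (zpowers_le.2 hxy) ?_⟩⟩
    rw [Nat.card_zpowers, Nat.card_zpowers, hx, hy.2]
  have hcyc := IsCyclic.card_orderOf_eq_totient (α := zpowers y) (d := d)
    (by rw [← Nat.card_eq_fintype_card, Nat.card_zpowers, hy.2])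
  rw [filter_filter]
  simp_rw [hgen]
  refine dvd_of_eq (hcyc ▸ card_bij (fun a _ => a.1) ?_ ?_ fun x hx => ?_)
  · simp
  · simp
  · rw [mem_filter] at hx
    exact ⟨⟨x, hx.2.1⟩, by simpa using hx.2.2, rfl⟩

theorem card_pow_prime_pow_succ_eq_one [Finite G] {p : ℕ} (hp : p.Prime) (k : ℕ) :
    Nat.card {x : G // x ^ p ^ (k + 1) = 1} =
      Nat.card {x : G // x ^ p ^ k = 1} + Nat.card {x : G // orderOf x = p ^ (k + 1)} := by
  classical
  have := Fact.mk hp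
  have hdisj : Disjoint (fun x : G => x ^ p ^ k = 1) (fun x => orderOf x = p ^ (k + 1)) := by
    refine Pi.disjoint_iff.2 fun x => Prop.disjoint_iff.2 fun ⟨hx, hox⟩ => ?_
    have := hox ▸ orderOf_dvd_of_pow_eq_one hx
    exact absurd ((Nat.pow_dvd_pow_iff_le_right hp.one_lt).1 this) (by omega)
  rw [← Nat.card_sum, ← Nat.card_congr (subtypeOrEquiv _ _ hdisj)]
  refine Nat.card_congr (Equiv.subtypeEquivRight fun x => ⟨fun hx => ?_, ?_⟩)
  · by_cases h : x ^ p ^ k = 1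
    · exact Or.inl h
    · exact Or.inr (orderOf_eq_prime_pow h hx)
  · rintro (hx | hx)
    · rw [pow_succ, pow_mul, hx, one_pow]
    · rw [← hx, pow_orderOf_eq_one]

theorem not_dvd_card_center_pow_eq_one [Finite G] {p b : ℕ} (hp : p.Prime) (hpb : ¬ p ∣ b) :
    ¬ p ∣ Nat.card {z : G // z ∈ center G ∧ z ^ b = 1} := by
  have := Fact.mk hp
  let K : Subgroup G :=
    { carrier := {z | z ∈ center G ∧ z ^ b = 1}
      mul_mem' := fun {x y} ⟨hx, hxb⟩ ⟨hy, hyb⟩ => ⟨mul_mem hx hy, by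
        have hxy : Commute x y := (mem_center_iff.1 hx y).symm
        rw [hxy.mul_pow, hxb, hyb, one_mul]⟩
      one_mem' := ⟨one_mem _, one_pow b⟩
      inv_mem' := fun ⟨hx, hxb⟩ => ⟨inv_mem hx, by rw [inv_pow, hxb, inv_one]⟩ }
  change ¬ p ∣ Nat.card K
  intro hdvd
  obtain ⟨z, hz⟩ := exists_prime_orderOf_dvd_card' p hdvd
  refine hpb ?_
  rw [← hz, ← orderOf_submonoid]
  exact orderOf_dvd_of_pow_eq_one z.2.2

theorem pow_dvd_card_pow_eq_one [Finite G] {p : ℕ} (hp : p.Prime) {k : ℕ}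
    (hk : p ^ k ∣ Nat.card G)
    (ih : ∀ H : Subgroup G, H ≠ ⊤ → ∀ n, n ∣ Nat.card H → n ∣ Nat.card {y : H // y ^ n = 1}) :
    p ^ k ∣ Nat.card {x : G // x ^ p ^ k = 1} := by
  have hG : Nat.card G ≠ 0 := Nat.card_pos.ne'
  refine Nat.decreasingInduction (motive := fun k _ => p ^ k ∣ Nat.card {x : G // x ^ p ^ k = 1})
    (fun k _ hsucc => ?_) ?_ ((hp.pow_dvd_iff_le_factorization hG).1 hk)
  · have hprim : p ^ k ∣ Nat.card {x : G // orderOf x = p ^ (k + 1)} :=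
      (Nat.totient_prime_pow_succ hp k ▸ dvd_mul_right _ _).trans (totient_dvd_card_orderOf_eq _)
    rw [card_pow_prime_pow_succ_eq_one hp] at hsucc
    exact (Nat.dvd_add_left hprim).1 ((pow_dvd_pow p k.le_succ).trans hsucc)
  · have hA := card_pow_mul_eq_one_modEq
      ((Nat.coprime_ordCompl hp hG).pow_left ((Nat.card G).factorization p))
      (Nat.ordProj_dvd _ _) ih
    rw [Nat.ordProj_mul_ordCompl_eq_self,
      Nat.card_congr (Equiv.subtypeUnivEquiv fun x => pow_card_eq_one')] at hA
    have hcentral := not_dvd_card_center_pow_eq_one (G := G) hp (Nat.not_dvd_ordCompl hp hG)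
    exact (Nat.Coprime.pow_left _ (hp.coprime_iff_not_dvd.2 hcentral)).dvd_of_dvd_mul_left
      ((hA.dvd_iff dvd_rfl).1 (Nat.ordProj_dvd _ _))

theorem dvd_card_pow_eq_one_of_forall_subgroup [Finite G]
    (ih : ∀ H : Subgroup G, H ≠ ⊤ → ∀ n, n ∣ Nat.card H → n ∣ Nat.card {y : H // y ^ n = 1})
    {n : ℕ} (hn : n ∣ Nat.card G) : n ∣ Nat.card {x : G // x ^ n = 1} := by
  have hn0 : n ≠ 0 := ne_zero_of_dvd_ne_zero Nat.card_pos.ne' hn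
  refine (Nat.dvd_iff_prime_pow_dvd_dvd _ n).2 fun p k hp hpk => ?_
  have hpn := (Nat.ordProj_dvd n p).trans hn
  have hA := card_pow_mul_eq_one_modEq ((Nat.coprime_ordCompl hp hn0).pow_left _) hpn ih
  rw [Nat.ordProj_mul_ordCompl_eq_self] at hA
  exact (pow_dvd_pow p ((hp.pow_dvd_iff_le_factorization hn0).1 hpk)).trans
    ((hA.dvd_iff dvd_rfl).2 (dvd_mul_of_dvd_right (pow_dvd_card_pow_eq_one hp hpn ih) _))

end

theorem frobenius_divisibility_general (G : Type*) [Group G] [Finite G] (m : ℕ)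
    (hdvd : m ∣ Nat.card G) : m ∣ Nat.card {x : G // x ^ m = 1} := by
  induction hG : Nat.card G using Nat.strong_induction_on generalizing G m with
  | _ N ih =>
  subst hG
  refine dvd_card_pow_eq_one_of_forall_subgroup (fun H hH n hn => ih _ ?_ H n hn rfl) hdvd
  exact (card_le_card_group H).lt_of_ne (mt (card_eq_iff_eq_top H).1 hH)

/-- Frobenius's theorem: if `m` divides the order of a finite group `G`, then `m` divides
the number of solutions of `x^m = 1` in `G`. -/
theorem frobenius_divisibility (G : Type*) [Group G] [Finite G] (m : ℕ) (hm : 0 < m)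
    (hdvd : m ∣ Nat.card G) : m ∣ Nat.card {x : G // x ^ m = 1} :=
  frobenius_divisibility_general G m hdvd
end

section
/- Let p be a prime and n ≥ p a positive integer. Then the number of elements of the symmetric group S_n whose order divides p, namely the sum over k from 0 to ⌊n/p⌋ of n!/(k! (n-pk)! p^k), is divisible by p. -/
/-!
Write `N k = n! / (k! (n - pk)! p^k)` as `choose n (pk) * B k * ((p - 1)!)^k`, where
`B k = uniformBell k p` counts partitions of `pk` points into `k` blocks of size `p` (and
`(p - 1)!` counts the cyclic orders of a block). Modulo `p`, Lucas's theorem gives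
`choose n (pk) ≡ choose (n / p) k` and `B (k + 1) = choose (kp + p - 1) (p - 1) * B k ≡ B k`,
while Wilson's theorem gives `(p - 1)! ≡ -1`. Hence `∑ N k ≡ ∑ (-1)^k choose (n / p) k = 0`,
as `n / p ≠ 0`.
-/

open Finset Nat

namespace Nat

theorem factorial_div_eq_choose_mul_uniformBell {p : ℕ} (hp : p ≠ 0) {n k : ℕ}
    (hkn : p * k ≤ n) :
    n ! / (k ! * (n - p * k)! * p ^ k) = n.choose (p * k) * (k.uniformBell p * (p - 1)! ^ k) := by
  refine Nat.div_eq_of_eq_mul_left (by positivity) ?_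
  have hfac : p ! = p * (p - 1)! := by rw [← Nat.mul_factorial_pred hp]
  calc n ! = n.choose (p * k) * (k * p)! * (n - p * k)! := by
        rw [mul_comm k, Nat.choose_mul_factorial_mul_factorial hkn]
    _ = n.choose (p * k) * (k.uniformBell p * p ! ^ k * k !) * (n - p * k)! := by
        rw [uniformBell_mul_eq k hp]
    _ = _ := by rw [hfac]; ring

variable {p : ℕ} [Fact p.Prime]

theorem choose_mul_modEq_choose_div (n k : ℕ) :
    n.choose (p * k) ≡ (n / p).choose k [MOD p] := by
  have hp : 0 < p := (Fact.out : p.Prime).pos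
  simpa [Nat.mul_div_cancel_left k hp] using
    Choose.choose_modEq_choose_mod_mul_choose_div_nat (n := n) (k := p * k) (p := p)

theorem uniformBell_modEq_one (k : ℕ) : k.uniformBell p ≡ 1 [MOD p] := by
  induction k with
  | zero => rw [uniformBell_zero_left]
  | succ k ih =>
    have hp : 0 < p := (Fact.out : p.Prime).pos
    have hlt : p - 1 < p := Nat.sub_lt hp one_pos
    have hchoose : (k * p + p - 1).choose (p - 1) ≡ 1 [MOD p] := by
      have hsplit : k * p + p - 1 = p - 1 + p * k := by rw [Nat.mul_comm]; omega
      simpa [hsplit, Nat.add_mul_div_left _ _ hp, Nat.add_mul_mod_self_left,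
        Nat.div_eq_of_lt hlt, Nat.mod_eq_of_lt hlt] using
        Choose.choose_modEq_choose_mod_mul_choose_div_nat (n := p - 1 + p * k) (k := p - 1) (p := p)
    simpa [uniformBell_succ_left] using hchoose.mul ih

theorem cast_choose_mul_uniformBell_mul_factorial_pow (n k : ℕ) :
    ((n.choose (p * k) * (k.uniformBell p * (p - 1)! ^ k) : ℕ) : ZMod p)
      = (-1) ^ k * (n / p).choose k := by
  push_cast
  rw [(ZMod.natCast_eq_natCast_iff _ _ _).mpr (choose_mul_modEq_choose_div n k),
    (ZMod.natCast_eq_natCast_iff _ _ _).mpr (uniformBell_modEq_one k), ZMod.wilsons_lemma]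
  ring

end Nat

/-- The number of elements of `S_n` of order dividing a prime `p ≤ n`, counted as the sum
over `k` of the number of elements made of `k` `p`-cycles and `n - pk` fixed points,
is divisible by `p`. -/
theorem symm_group_order_p_count_div (p n : ℕ) (hp : p.Prime) (hpn : p ≤ n) :
    p ∣ ∑ k ∈ Finset.range (n / p + 1),
      n.factorial / (k.factorial * (n - p * k).factorial * p ^ k) := by
  have := Fact.mk hp
  have hm : n / p ≠ 0 := (Nat.div_pos hpn hp.pos).ne'
  rw [← ZMod.natCast_eq_zero_iff, Nat.cast_sum]
  calc ∑ k ∈ range (n / p + 1), ((n ! / (k ! * (n - p * k)! * p ^ k) : ℕ) : ZMod p)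
      = ∑ k ∈ range (n / p + 1), ((-1) ^ k * (n / p).choose k : ℤ) := by
        push_cast
        refine sum_congr rfl fun k hk => ?_
        have hkn : p * k ≤ n := by
          rw [Nat.mul_comm]; exact (Nat.le_div_iff_mul_le hp.pos).mp (mem_range_succ_iff.mp hk)
        rw [Nat.factorial_div_eq_choose_mul_uniformBell hp.ne_zero hkn,
          Nat.cast_choose_mul_uniformBell_mul_factorial_pow]
    _ = 0 := by
        exact_mod_cast congrArg (Int.cast : ℤ → ZMod p)
          (Int.alternating_sum_range_choose_of_ne hm)
end

section
/- Let p ≡ 1 (mod 4) be prime. Define u(0) = 1 and for n ≥ 1, u(n) = ∏_{i=1}^{n}(4i-1)^2 − Σ_{m=0}^{n-1} C(2n+1, 2m+1) · (∏_{j=1}^{n-m}(4j-3)^2) · u(m). Then u((p-1)/2) ≡ ∏_{i=1}^{(p-1)/2}(4i-1)^2 (mod p), i.e. u((p-1)/2) ≡ 3²·7²···(2p-3)² (mod p). -/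
/-! Since `2 * ((p - 1) / 2) + 1 = p`, every binomial coefficient `C(p, 2m+1)` in the recurrence
for `u ((p - 1) / 2)` has `0 < 2m + 1 < p` and is therefore divisible by `p`; only the leading
product survives modulo `p`. -/

theorem Nat.Prime.sum_choose_odd_mul_modEq_zero {p N : ℕ} (hp : p.Prime) (hN : 2 * N ≤ p)
    (f : ℕ → ℤ) :
    ∑ m ∈ Finset.range N, (p.choose (2 * m + 1) : ℤ) * f m ≡ 0 [ZMOD (p : ℤ)] := by
  refine Int.modEq_zero_iff_dvd.mpr (Finset.dvd_sum fun m hm => ?_)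
  have hm : m < N := Finset.mem_range.mp hm
  exact (Int.natCast_dvd_natCast.mpr (hp.dvd_choose_self (by omega) (by omega))).mul_right _

theorem u_at_half_p_minus_one_general (p : ℕ) (hp : p.Prime) (hp4 : p % 4 = 1)
    (u : ℕ → ℤ)
    (hu : ∀ n, 1 ≤ n → u n = (∏ i ∈ Finset.Icc 1 n, (4 * (i : ℤ) - 1) ^ 2)
      - ∑ m ∈ Finset.range n, ((2 * n + 1).choose (2 * m + 1) : ℤ)
          * (∏ j ∈ Finset.Icc 1 (n - m), (4 * (j : ℤ) - 3) ^ 2) * u m) :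
    u ((p - 1) / 2) ≡ ∏ i ∈ Finset.Icc 1 ((p - 1) / 2), (4 * (i : ℤ) - 1) ^ 2 [ZMOD (p : ℤ)] := by
  have hN : 1 ≤ (p - 1) / 2 := by have := hp.two_le; omega
  have hodd : 2 * ((p - 1) / 2) + 1 = p := by omega
  rw [hu _ hN, hodd]
  simp_rw [mul_assoc]
  simpa using (Int.ModEq.refl _).sub (hp.sum_choose_odd_mul_modEq_zero (by omega) _)

/-- For a prime `p ≡ 1 (mod 4)`, Romik's sequence `u` (given by its recurrence) satisfies
`u((p-1)/2) ≡ ∏_{i=1}^{(p-1)/2} (4i-1)^2 (mod p)`. -/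
theorem u_at_half_p_minus_one (p : ℕ) (hp : p.Prime) (hp4 : p % 4 = 1)
    (u : ℕ → ℤ) (hu0 : u 0 = 1)
    (hu : ∀ n, 1 ≤ n → u n = (∏ i ∈ Finset.Icc 1 n, (4 * (i : ℤ) - 1) ^ 2)
      - ∑ m ∈ Finset.range n, ((2 * n + 1).choose (2 * m + 1) : ℤ)
          * (∏ j ∈ Finset.Icc 1 (n - m), (4 * (j : ℤ) - 3) ^ 2) * u m) :
    u ((p - 1) / 2) ≡ ∏ i ∈ Finset.Icc 1 ((p - 1) / 2), (4 * (i : ℤ) - 1) ^ 2 [ZMOD (p : ℤ)] :=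
  u_at_half_p_minus_one_general p hp hp4 u hu
end

section
/- Let p ≡ 1 (mod 4) be prime and let u(n) be defined by u(0)=1 and u(n) = ∏_{i=1}^{n}(4i-1)^2 − Σ_{m=0}^{n-1} C(2n+1,2m+1) (∏_{j=1}^{n-m}(4j-3)^2) u(m). Then u((p+1)/2) ≡ 0 (mod p). -/
/-!
Put `p = 2n - 1`, so that `2n + 1 = p + 2`. Modulo `p`, the binomial coefficients `C(p, 2m+1)` with
`2m + 1 < p` vanish, so `u(n - 1)` reduces to the product `∏_{i ≤ n-1} (4i-1)^2`. In the recurrence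
for `u(n)`, `C(p+2, 2m+1)` vanishes for `3 ≤ 2m+1 < p` and `C(p+2, p) ≡ 1`; the term `m = 0` is killed
by the factor `4j - 3 = p` of its product, which exists because `p ≡ 1 (mod 4)`. What is left is
`∏_{i ≤ n} (4i-1)^2 - ∏_{i ≤ n-1} (4i-1)^2`, and this vanishes since the last factor is
`(4n-1)^2 = (2p+1)^2 ≡ 1`.
-/

open Finset

def RomikRecurrence {R : Type*} [CommRing R] (u : ℕ → R) : Prop :=
  ∀ n, 1 ≤ n → u n = (∏ i ∈ Icc 1 n, (4 * (i : R) - 1) ^ 2)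
    - ∑ m ∈ range n, ((2 * n + 1).choose (2 * m + 1) : R)
        * (∏ j ∈ Icc 1 (n - m), (4 * (j : R) - 3) ^ 2) * u m

theorem RomikRecurrence.comp_ringHom {R S : Type*} [CommRing R] [CommRing S] {u : ℕ → R}
    (hu : RomikRecurrence u) (f : R →+* S) : RomikRecurrence (f ∘ u) := by
  intro n hn
  simp [hu n hn, map_sub, map_sum, map_prod, map_mul, map_pow, map_natCast, map_ofNat]

section ZModPrime

variable {p : ℕ} [Fact p.Prime]

theorem ZMod.natCast_choose_add_two_self (hp : p ≠ 2) : (((p + 2).choose p : ℕ) : ZMod p) = 1 := by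
  have h2 : 2 < p := lt_of_le_of_ne (Fact.out : p.Prime).two_le (Ne.symm hp)
  have lucas := Choose.choose_modEq_choose_mod_mul_choose_div_nat (n := p + 2) (k := p) (p := p)
  rw [← ZMod.natCast_eq_natCast_iff] at lucas
  have hdiv : (p + 2) / p = 1 := by
    rw [Nat.add_div_of_dvd_right (dvd_refl p), Nat.div_self (by omega), Nat.div_eq_of_lt h2]
  simpa [Nat.mod_eq_of_lt h2, hdiv, Nat.div_self (by omega : 0 < p)] using lucas

theorem ZMod.natCast_choose_add_two_eq_zero {k : ℕ} (hk3 : 3 ≤ k) (hkp : k < p) :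
    (((p + 2).choose k : ℕ) : ZMod p) = 0 :=
  (ZMod.natCast_eq_zero_iff _ _).mpr <| (Fact.out : p.Prime).dvd_choose hkp (by omega) (by omega)

theorem ZMod.prod_Icc_four_mul_sub_three_sq_eq_zero (hp4 : p % 4 = 1) {n : ℕ}
    (hn : (p + 3) / 4 ≤ n) : ∏ j ∈ Icc 1 n, (4 * (j : ZMod p) - 3) ^ 2 = 0 := by
  refine prod_eq_zero (i := (p + 3) / 4) (mem_Icc.mpr ⟨by omega, hn⟩) ?_
  have hfactor : ((4 * ((p + 3) / 4) : ℕ) : ZMod p) = (p : ℕ) + 3 := by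
    rw [show 4 * ((p + 3) / 4) = p + 3 by omega, Nat.cast_add, Nat.cast_ofNat]
  push_cast at hfactor
  simp [hfactor]

namespace RomikRecurrence

variable {v : ℕ → ZMod p}

theorem eq_prod_of_two_mul_add_one_eq (hv : RomikRecurrence v) {n : ℕ} (hn : 2 * n + 1 = p) :
    v n = ∏ i ∈ Icc 1 n, (4 * (i : ZMod p) - 1) ^ 2 := by
  have hp := (Fact.out : p.Prime)
  rw [hv n (by have := hp.two_le; omega), sum_eq_zero, sub_zero]
  intro m hm
  have hchoose : (((2 * n + 1).choose (2 * m + 1) : ℕ) : ZMod p) = 0 := by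
    rw [hn, ZMod.natCast_eq_zero_iff]
    exact hp.dvd_choose_self (by omega) (by rw [mem_range] at hm; omega)
  rw [hchoose, zero_mul, zero_mul]

theorem eq_zero_of_two_mul_eq_add_one (hv : RomikRecurrence v) (hp4 : p % 4 = 1) {n : ℕ}
    (hn : 2 * n = p + 1) : v n = 0 := by
  obtain ⟨m, rfl⟩ : ∃ m, n = m + 1 := ⟨n - 1, by omega⟩
  have hsize : 2 * (m + 1) + 1 = p + 2 := by omega
  have hlast : v m = ∏ i ∈ Icc 1 m, (4 * (i : ZMod p) - 1) ^ 2 :=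
    hv.eq_prod_of_two_mul_add_one_eq (by omega)
  rw [hv (m + 1) m.succ_pos, sum_eq_single_of_mem m (mem_range.mpr m.lt_succ_self)]
  · have hp0 : ((2 * m + 1 : ℕ) : ZMod p) = 0 := by
      rw [show 2 * m + 1 = p by omega, ZMod.natCast_self]
    push_cast at hp0
    rw [hsize, show 2 * m + 1 = p by omega, ZMod.natCast_choose_add_two_self (by omega),
      Nat.add_sub_cancel_left, Icc_self, prod_singleton, hlast, prod_Icc_succ_top (by omega)]
    push_cast
    linear_combination (∏ i ∈ Icc 1 m, (4 * (i : ZMod p) - 1) ^ 2) * (8 * (m : ZMod p) + 8) * hp0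
  · intro k hk hkm
    rcases Nat.eq_zero_or_pos k with rfl | hk0
    · rw [ZMod.prod_Icc_four_mul_sub_three_sq_eq_zero hp4 (by omega), mul_zero, zero_mul]
    · rw [mem_range] at hk
      rw [hsize, ZMod.natCast_choose_add_two_eq_zero (by omega) (by omega), zero_mul, zero_mul]

end RomikRecurrence

end ZModPrime

theorem u_at_half_p_plus_one_general (p : ℕ) (hp : p.Prime) (hp4 : p % 4 = 1)
    (u : ℕ → ℤ)
    (hu : ∀ n, 1 ≤ n → u n = (∏ i ∈ Finset.Icc 1 n, (4 * (i : ℤ) - 1) ^ 2)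
      - ∑ m ∈ Finset.range n, ((2 * n + 1).choose (2 * m + 1) : ℤ)
          * (∏ j ∈ Finset.Icc 1 (n - m), (4 * (j : ℤ) - 3) ^ 2) * u m) :
    u ((p + 1) / 2) ≡ 0 [ZMOD (p : ℤ)] := by
  have : Fact p.Prime := ⟨hp⟩
  have hu : RomikRecurrence u := hu
  rw [Int.modEq_zero_iff_dvd, ← ZMod.intCast_zmod_eq_zero_iff_dvd]
  exact (hu.comp_ringHom (Int.castRingHom (ZMod p))).eq_zero_of_two_mul_eq_add_one hp4 (by omega)

/-- For a prime `p ≡ 1 (mod 4)`, Romik's sequence `u` satisfies `u((p+1)/2) ≡ 0 (mod p)`. -/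
theorem u_at_half_p_plus_one (p : ℕ) (hp : p.Prime) (hp4 : p % 4 = 1)
    (u : ℕ → ℤ) (hu0 : u 0 = 1)
    (hu : ∀ n, 1 ≤ n → u n = (∏ i ∈ Finset.Icc 1 n, (4 * (i : ℤ) - 1) ^ 2)
      - ∑ m ∈ Finset.range n, ((2 * n + 1).choose (2 * m + 1) : ℤ)
          * (∏ j ∈ Finset.Icc 1 (n - m), (4 * (j : ℤ) - 3) ^ 2) * u m) :
    u ((p + 1) / 2) ≡ 0 [ZMOD (p : ℤ)] :=
  u_at_half_p_plus_one_general p hp hp4 u hu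
end

section
/- Let p ≡ 1 (mod 4) be prime and define v(0) = 1 and, for n ≥ 1, v(n) = 2^{n-1} ∏_{i=1}^{n}(4i-3)^2 − (1/2) Σ_{m=1}^{n-1} C(2n, 2m) v(m) v(n-m). Then v(n) ≡ 0 (mod p) for all n ≥ (p+1)/2. -/
/-!
Strong induction on `n ≥ (p + 1) / 2`. Writing `p = 4k + 1`, the product contains the factor
`(4(k + 1) - 3)² = p²`. In the convolution term for `m`, either `m` or `n - m` is again at least
`(p + 1) / 2`, or else `2m` and `2(n - m)` are both below `p` while their sum `2n` is not, and then
`p ∣ C(2n, 2m)`. So `p ∣ 2 v(n)`, and `p` is odd.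
-/

lemma dvd_prod_four_mul_sub_three_sq {p n : ℕ} (hp4 : p % 4 = 1) (hn : p + 3 ≤ 4 * n) :
    (p : ℤ) ∣ ∏ i ∈ Finset.Icc 1 n, (4 * (i : ℤ) - 3) ^ 2 := by
  have hmem : (p + 3) / 4 ∈ Finset.Icc 1 n := Finset.mem_Icc.mpr ⟨by omega, by omega⟩
  have hfactor : 4 * (((p + 3) / 4 : ℕ) : ℤ) - 3 = p := by omega
  exact (Dvd.intro_left _ (by rw [hfactor]; ring)).trans (Finset.dvd_prod_of_mem _ hmem)

lemma Nat.Prime.dvd_sum_choose_mul_mul {p n : ℕ} (hp : p.Prime) (hn : p ≤ 2 * n) (v : ℕ → ℤ)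
    (hv : ∀ j < n, p ≤ 2 * j → (p : ℤ) ∣ v j) :
    (p : ℤ) ∣ ∑ m ∈ Finset.Icc 1 (n - 1), ((2 * n).choose (2 * m) : ℤ) * v m * v (n - m) := by
  refine Finset.dvd_sum fun m hm => ?_
  obtain ⟨hm1, hmn⟩ := Finset.mem_Icc.mp hm
  by_cases hpm : p ≤ 2 * m
  · exact ((hv m (by omega) hpm).mul_left _).mul_right _
  by_cases hpnm : p ≤ 2 * (n - m)
  · exact (hv (n - m) (by omega) hpnm).mul_left _
  have hchoose : p ∣ (2 * n).choose (2 * m) := by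
    rw [show 2 * n = 2 * m + 2 * (n - m) by omega]
    exact hp.dvd_choose_add (by omega) (by omega) (by omega)
  exact ((Int.natCast_dvd_natCast.mpr hchoose).mul_right _).mul_right _

lemma Nat.Prime.dvd_of_dvd_two_mul {p : ℕ} (hp : p.Prime) (hp2 : p ≠ 2) {x : ℤ}
    (h : (p : ℤ) ∣ 2 * x) : (p : ℤ) ∣ x := by
  refine ((Nat.prime_iff_prime_int.mp hp).dvd_or_dvd h).resolve_left fun h2 => hp2 ?_
  exact (Nat.prime_dvd_prime_iff_eq hp Nat.prime_two).mp (by exact_mod_cast h2)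

theorem v_vanishes_general (p : ℕ) (hp : p.Prime) (hp4 : p % 4 = 1)
    (v : ℕ → ℤ)
    (hv : ∀ n, 1 ≤ n → 2 * v n = 2 ^ n * (∏ i ∈ Finset.Icc 1 n, (4 * (i : ℤ) - 3) ^ 2)
      - ∑ m ∈ Finset.Icc 1 (n - 1), ((2 * n).choose (2 * m) : ℤ) * v m * v (n - m)) :
    ∀ n, (p + 1) / 2 ≤ n → v n ≡ 0 [ZMOD (p : ℤ)] := by
  intro n
  induction n using Nat.strong_induction_on with
  | _ n ih =>
    intro hn
    have hprod := dvd_prod_four_mul_sub_three_sq (n := n) hp4 (by omega)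
    have hsum := hp.dvd_sum_choose_mul_mul (n := n) (by omega) v
      fun j hj hpj => Int.modEq_zero_iff_dvd.mp (ih j hj (by omega))
    have htwice : (p : ℤ) ∣ 2 * v n := by
      rw [hv n (by omega)]
      exact dvd_sub (hprod.mul_left _) hsum
    exact Int.modEq_zero_iff_dvd.mpr (hp.dvd_of_dvd_two_mul (by omega) htwice)

/-- For a prime `p ≡ 1 (mod 4)`, Romik's sequence `v` (defined by
`v(n) = 2^{n-1} ∏_{i=1}^n (4i-3)^2 − (1/2) Σ_{m=1}^{n-1} C(2n,2m) v(m) v(n-m)`, stated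
here with both sides multiplied by `2`) vanishes mod `p` for all `n ≥ (p+1)/2`. -/
theorem v_vanishes (p : ℕ) (hp : p.Prime) (hp4 : p % 4 = 1)
    (v : ℕ → ℤ) (hv0 : v 0 = 1)
    (hv : ∀ n, 1 ≤ n → 2 * v n = 2 ^ n * (∏ i ∈ Finset.Icc 1 n, (4 * (i : ℤ) - 3) ^ 2)
      - ∑ m ∈ Finset.Icc 1 (n - 1), ((2 * n).choose (2 * m) : ℤ) * v m * v (n - m)) :
    ∀ n, (p + 1) / 2 ≤ n → v n ≡ 0 [ZMOD (p : ℤ)] :=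
  v_vanishes_general p hp hp4 v hv
end

section
/- Let p be a prime with p ≤ 2n − γ, and suppose either γ = δ = 0, or 0 < γ < p and 0 ≤ δ ≤ ⌊(γ-1)/2⌋. Then Σ over k from ⌈n/p⌉ to n with n − k ≡ δ (mod (p−1)/2) of (2n−γ)! / ( ((2(n−k−δ)/(p−1))! · (2n − γ − p·2(n−k−δ)/(p−1))! · p^{2(n−k−δ)/(p−1)} ) is congruent to 0 modulo p. -/
/-!
`pCycleCount p N j` is the number of permutations of `N` points that are products of exactly `j`
disjoint `p`-cycles. Since `(pj)! = j! p^j ∏_{i<j} (pi+1)(pi+2)⋯(pi+p-1)` and each factor of the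
product is `≡ (p-1)! ≡ -1 (mod p)` by Wilson, Lucas' theorem gives
`pCycleCount p N j ≡ (-1)^j C(⌊N/p⌋, j) (mod p)`, so summing over `j` yields `(1-1)^⌊N/p⌋ = 0`
as soon as `p ≤ N`.

With `p = 2m+1`, the substitution `k = n - δ - mj` turns the sum of the theorem into exactly this
sum over `j`: the hypotheses on `γ, δ` give `pδ ≤ mγ`, which keeps `k ≥ ⌈n/p⌉` whenever
`pj ≤ 2n - γ`.
-/

open Finset
open scoped Nat

def pCycleCount (p N j : ℕ) : ℕ :=
  if p * j ≤ N then N ! / (j ! * (N - p * j)! * p ^ j) else 0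

theorem factorial_mul_eq_prod_ascFactorial {p : ℕ} (hp : 0 < p) (j : ℕ) :
    (p * j)! = j ! * p ^ j * ∏ i ∈ range j, (p * i + 1).ascFactorial (p - 1) := by
  obtain ⟨p, rfl⟩ := Nat.exists_eq_add_one_of_ne_zero hp.ne'
  induction j with
  | zero => simp
  | succ j ih =>
    rw [Nat.add_sub_cancel] at ih ⊢
    rw [show (p + 1) * (j + 1) = (p + 1) * j + (p + 1) by ring,
      ← Nat.factorial_mul_ascFactorial, Nat.ascFactorial_succ, ih, prod_range_succ,
      Nat.factorial_succ, pow_succ]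
    ring

theorem pCycleCount_eq_choose_mul_prod {p : ℕ} (hp : 0 < p) (N j : ℕ) :
    pCycleCount p N j = N.choose (p * j) * ∏ i ∈ range j, (p * i + 1).ascFactorial (p - 1) := by
  unfold pCycleCount
  split_ifs with h
  · apply Nat.div_eq_of_eq_mul_left (by positivity)
    rw [← Nat.choose_mul_factorial_mul_factorial h, factorial_mul_eq_prod_ascFactorial hp]
    ring
  · rw [Nat.choose_eq_zero_of_lt (not_le.mp h), zero_mul]

theorem ascFactorial_mul_add_one_eq_neg_one {p : ℕ} (hp : p.Prime) (i : ℕ) :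
    ((p * i + 1).ascFactorial (p - 1) : ZMod p) = -1 := by
  have := Fact.mk hp
  rw [Nat.ascFactorial_eq_prod_range]
  push_cast
  simp only [ZMod.natCast_self, zero_mul, zero_add]
  rw [← ZMod.wilsons_lemma, ← prod_range_add_one_eq_factorial]
  push_cast
  simp only [add_comm]

theorem pCycleCount_eq_choose_mul_neg_one_pow {p : ℕ} (hp : p.Prime) (N j : ℕ) :
    (pCycleCount p N j : ZMod p) = (N / p).choose j * (-1) ^ j := by
  have := Fact.mk hp
  have lucas : (N.choose (p * j) : ZMod p) = (N / p).choose j := by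
    rw [ZMod.natCast_eq_natCast_iff]
    simpa [Nat.mul_div_cancel_left j hp.pos] using
      Choose.choose_modEq_choose_mod_mul_choose_div_nat (n := N) (k := p * j) (p := p)
  rw [pCycleCount_eq_choose_mul_prod hp.pos, Nat.cast_mul, lucas, Nat.cast_prod,
    prod_congr rfl fun i _ => ascFactorial_mul_add_one_eq_neg_one hp i, prod_const, card_range]

theorem prime_dvd_sum_pCycleCount {p N B : ℕ} (hp : p.Prime) (hpN : p ≤ N) (hB : N / p < B) :
    p ∣ ∑ j ∈ range B, pCycleCount p N j := by
  have hNp : N / p ≠ 0 := (Nat.div_pos hpN hp.pos).ne'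
  rw [← ZMod.natCast_eq_zero_iff, Nat.cast_sum]
  simp_rw [pCycleCount_eq_choose_mul_neg_one_pow hp]
  rw [eventually_constant_sum (fun j hj => by rw [Nat.choose_eq_zero_of_lt hj]; simp) hB]
  simpa [mul_comm] using
    congrArg (Int.cast : ℤ → ZMod p) (Int.alternating_sum_range_choose_of_ne hNp)

theorem sum_filter_mod_eq_sum_filter {M : Type*} [AddCommMonoid M] (f : ℕ → M)
    {m q n δ : ℕ} (hm : 0 < m) (hδ : δ < m) :
    ∑ k ∈ Icc q n with (n - k) % m = δ, f ((n - k - δ) / m) =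
      ∑ j ∈ range (n + 1) with q + δ + m * j ≤ n, f j := by
  have hsplit : ∀ k, (n - k) % m = δ → n - k - δ = m * ((n - k - δ) / m) := by
    intro k hk
    have := Nat.div_add_mod (n - k) m
    rw [show n - k - δ = m * ((n - k) / m) by omega, Nat.mul_div_cancel_left _ hm]
  refine sum_nbij' (fun k => (n - k - δ) / m) (fun j => n - δ - m * j) ?_ ?_ ?_ ?_
    fun _ _ => rfl
  · intro k hk
    simp only [mem_filter, mem_Icc, mem_range] at hk ⊢
    have := hsplit k hk.2
    have : (n - k - δ) / m ≤ m * ((n - k - δ) / m) := Nat.le_mul_of_pos_left _ hm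
    have := Nat.mod_le (n - k) m
    omega
  · intro j hj
    simp only [mem_filter, mem_Icc, mem_range] at hj ⊢
    refine ⟨by omega, ?_⟩
    rw [show n - (n - δ - m * j) = δ + m * j by omega, Nat.add_mul_mod_self_left,
      Nat.mod_eq_of_lt hδ]
  · intro k hk
    simp only [mem_filter, mem_Icc] at hk
    have := hsplit k hk.2
    have := Nat.mod_le (n - k) m
    omega
  · intro j hj
    simp only [mem_filter, mem_range] at hj
    rw [show n - (n - δ - m * j) - δ = m * j by omega, Nat.mul_div_cancel_left _ hm]

theorem reindexed_frobenius_sum_general (p n γ δ : ℕ) (hp : p.Prime) (hodd : Odd p)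
    (hpn : p ≤ 2 * n - γ)
    (hγδ : (γ = 0 ∧ δ = 0) ∨ (0 < γ ∧ γ < p ∧ δ ≤ (γ - 1) / 2)) :
    p ∣ ∑ k ∈ (Finset.Icc ((n + p - 1) / p) n).filter
          (fun k => (n - k) % ((p - 1) / 2) = δ),
        (fun j => if p * j ≤ 2 * n - γ then
            (2 * n - γ).factorial / (j.factorial * (2 * n - γ - p * j).factorial * p ^ j)
          else 0) ((n - k - δ) / ((p - 1) / 2)) := by
  obtain ⟨m, rfl⟩ := hodd
  have hm : 0 < m := by have := hp.two_le; omega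
  have hδm : δ < m := by omega
  have hδγ : (2 * m + 1) * δ ≤ m * γ := by
    rcases hγδ with ⟨rfl, rfl⟩ | ⟨hγ, -, hδ⟩
    · simp
    · nlinarith [show 2 * δ + 1 ≤ γ by omega]
  obtain ⟨N, hN⟩ : ∃ N, 2 * n - γ = N ∧ N + γ = 2 * n := ⟨2 * n - γ, rfl, by omega⟩
  have hindex : ∀ j, (2 * m + 1) * j ≤ 2 * n - γ →
      (n + (2 * m + 1) - 1) / (2 * m + 1) + δ + m * j ≤ n := by
    intro j hj
    have hceil : (n + (2 * m + 1) - 1) / (2 * m + 1) * (2 * m + 1) ≤ n + 2 * m :=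
      (Nat.div_mul_le_self _ _).trans (by omega)
    generalize (n + (2 * m + 1) - 1) / (2 * m + 1) = q at hceil ⊢
    rw [hN.1] at hj
    refine Nat.le_of_lt_succ (Nat.lt_of_mul_lt_mul_left (a := 2 * m + 1) ?_)
    nlinarith [Nat.mul_le_mul_left m hj, congrArg (m * ·) hN.2]
  show _ ∣ ∑ k ∈ _, pCycleCount _ _ _
  rw [show (2 * m + 1 - 1) / 2 = m by omega, sum_filter_mod_eq_sum_filter _ hm hδm,
    sum_filter_of_ne (f := pCycleCount _ _) fun j _ hj =>
      hindex j (by_contra fun h => hj (if_neg h))]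
  exact prime_dvd_sum_pCycleCount hp hpn (Nat.div_lt_of_lt_mul (by nlinarith))

/-- The re-indexed Frobenius sum vanishes mod `p`: for an odd prime `p ≤ 2n − γ`, with
either `γ = δ = 0` or `0 < γ < p` and `δ ≤ ⌊(γ-1)/2⌋`, the sum over `k` from `⌈n/p⌉` to `n`
with `n − k ≡ δ (mod (p−1)/2)` of `(2n−γ)!/(j!·(2n−γ−pj)!·p^j)` with
`j = 2(n−k−δ)/(p−1)` (terms with `pj > 2n−γ` being `0`) is divisible by `p`. -/
theorem reindexed_frobenius_sum (p n γ δ : ℕ) (hp : p.Prime) (hodd : Odd p)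
    (hpn : p ≤ 2 * n - γ) (hγn : γ ≤ 2 * n)
    (hγδ : (γ = 0 ∧ δ = 0) ∨ (0 < γ ∧ γ < p ∧ δ ≤ (γ - 1) / 2)) :
    p ∣ ∑ k ∈ (Finset.Icc ((n + p - 1) / p) n).filter
          (fun k => (n - k) % ((p - 1) / 2) = δ),
        (fun j => if p * j ≤ 2 * n - γ then
            (2 * n - γ).factorial / (j.factorial * (2 * n - γ - p * j).factorial * p ^ j)
          else 0) ((n - k - δ) / ((p - 1) / 2)) :=
  reindexed_frobenius_sum_general p n γ δ hp hodd hpn hγδ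
end
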